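/- Let q be a power of an odd prime. The set of elliptic elements of sl(2,𝔽_q) has cardinality q·(q−1)²/2. -/

import Mathlib

/-!
A trace-zero matrix `!![a, b; c, -a]` has characteristic polynomial `X² - (a² + bc)`, so it
is elliptic exactly when `n = a² + bc` is a non-square. Then `b ≠ 0` and `c = (n - a²) / b`, so
elliptic elements correspond to triples `(a, n, b)` with `n` a non-square and `b` a unit. In odd
characteristic the quadratic character sums to zero, so exactly half of the `q - 1` nonzero
elements are non-squares, giving `q · (q - 1)/2 · (q - 1)`.
-/

open Polynomial

theorem Polynomial.irreducible_X_sq_sub_C_iff {K : Type*} [Field K] {a : K} :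
    Irreducible (X ^ 2 - C a) ↔ ¬IsSquare a := by
  simp [X_pow_sub_C_irreducible_iff_of_prime Nat.prime_two, isSquare_iff_exists_sq, eq_comm]

namespace Matrix

variable {F : Type*} [Field F]

theorem neg_det_eq_of_trace_eq_zero {R : Type*} [CommRing R] {M : Matrix (Fin 2) (Fin 2) R}
    (h : M.trace = 0) : -M.det = M 0 0 ^ 2 + M 0 1 * M 1 0 := by
  rw [trace_fin_two] at h
  rw [det_fin_two, show M 1 1 = -M 0 0 by linear_combination h]
  ring

theorem charpoly_eq_X_sq_sub_C_of_trace_eq_zero {R : Type*} [CommRing R] [Nontrivial R]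
    {M : Matrix (Fin 2) (Fin 2) R} (h : M.trace = 0) : M.charpoly = X ^ 2 - C (-M.det) := by
  rw [charpoly_fin_two, h, map_neg, map_zero]
  ring

theorem irreducible_charpoly_iff_of_trace_eq_zero {M : Matrix (Fin 2) (Fin 2) F}
    (h : M.trace = 0) : Irreducible M.charpoly ↔ ¬IsSquare (-M.det) := by
  rw [charpoly_eq_X_sq_sub_C_of_trace_eq_zero h, irreducible_X_sq_sub_C_iff]

theorem ne_zero_of_not_isSquare_neg_det {M : Matrix (Fin 2) (Fin 2) F} (htr : M.trace = 0)
    (hsq : ¬IsSquare (-M.det)) : M 0 1 ≠ 0 := by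
  intro h
  exact hsq ⟨M 0 0, by rw [neg_det_eq_of_trace_eq_zero htr, h]; ring⟩

def traceZeroNonsquareDetEquiv :
    {M : Matrix (Fin 2) (Fin 2) F // M.trace = 0 ∧ ¬IsSquare (-M.det)} ≃
      F × {n : F // ¬IsSquare n} × Fˣ where
  toFun M :=
    (M.1 0 0, ⟨-M.1.det, M.2.2⟩, Units.mk0 _ (ne_zero_of_not_isSquare_neg_det M.2.1 M.2.2))
  invFun p :=
    have htr : (!![p.1, (p.2.2 : F); (p.2.1 - p.1 ^ 2) / p.2.2, -p.1]).trace = 0 := by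
      simp [trace_fin_two]
    ⟨_, htr, by
      rw [neg_det_eq_of_trace_eq_zero htr]
      simpa [mul_div_cancel₀] using p.2.1.2⟩
  left_inv := by
    rintro ⟨M, htr, hsq⟩
    have hb := ne_zero_of_not_isSquare_neg_det htr hsq
    have hdet := neg_det_eq_of_trace_eq_zero htr
    rw [trace_fin_two] at htr
    apply Subtype.ext
    show !![M 0 0, M 0 1; (-M.det - M 0 0 ^ 2) / M 0 1, -M 0 0] = M
    rw [hdet, add_sub_cancel_left, mul_div_cancel_left₀ _ hb,
      show -M 0 0 = M 1 1 by linear_combination -htr, ← eta_fin_two]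
  right_inv := by
    rintro ⟨a, ⟨n, hn⟩, b⟩
    ext
    · rfl
    · show -det !![a, (b : F); (n - a ^ 2) / b, -a] = n
      rw [det_fin_two_of, mul_div_cancel₀ _ b.ne_zero]
      ring
    · rfl

end Matrix

theorem FiniteField.two_mul_card_nonsquares {F : Type*} [Field F] [Fintype F]
    (hF : ringChar F ≠ 2) :
    2 * Nat.card {a : F // ¬IsSquare a} = Fintype.card F - 1 := by
  classical
  have hχ (a : F) : quadraticChar F a =
      1 - (if a = 0 then 1 else 0) - 2 * (if ¬IsSquare a then 1 else 0) := by
    by_cases ha : a = 0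
    · simp [ha]
    by_cases hsq : IsSquare a
    · simp [ha, hsq, (quadraticChar_one_iff_isSquare ha).mpr hsq]
    · simp [ha, hsq, quadraticChar_neg_one_iff_not_isSquare.mpr hsq]
  have hsum := quadraticChar_sum_zero hF
  simp only [hχ, Finset.sum_sub_distrib, ← Finset.mul_sum, Finset.sum_ite_eq', Finset.mem_univ,
    if_true, Finset.sum_boole, Finset.sum_const, Finset.card_univ, nsmul_one] at hsum
  have := Fintype.card_pos (α := F)
  rw [Nat.card_eq_fintype_card, Fintype.card_subtype]
  omega

theorem card_elliptic_sl2_general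
    (q : ℕ) (hq : Odd q)
    (F : Type) [Field F] [Fintype F] (hcard : Fintype.card F = q) :
    Nat.card {X : Matrix (Fin 2) (Fin 2) F // X.trace = 0 ∧ Irreducible X.charpoly}
      = q * (q - 1) ^ 2 / 2 := by
  have hF : ringChar F ≠ 2 := fun h => by
    have := FiniteField.even_card_of_char_two h
    have := Nat.odd_iff.mp hq
    omega
  have hN : 2 * Nat.card {a : F // ¬IsSquare a} = q - 1 :=
    hcard ▸ FiniteField.two_mul_card_nonsquares hF
  have hElliptic := Equiv.subtypeEquivRight fun M : Matrix (Fin 2) (Fin 2) F =>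
    and_congr_right fun h => Matrix.irreducible_charpoly_iff_of_trace_eq_zero (M := M) h
  rw [Nat.card_congr (hElliptic.trans Matrix.traceZeroNonsquareDetEquiv), Nat.card_prod,
    Nat.card_prod, Nat.card_units, Nat.card_eq_fintype_card (α := F), hcard, ← hN]
  exact (Nat.div_eq_of_eq_mul_left two_pos (by ring)).symm

/-- For `q` a power of an odd prime, the set of elliptic elements of `sl(2,𝔽_q)`
(trace-zero `2×2` matrices with irreducible characteristic polynomial) has
cardinality `q·(q-1)²/2`. -/
theorem card_elliptic_sl2
    (q : ℕ) (hq : Odd q)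
    (F : Type) [Field F] [Fintype F] [DecidableEq F] (hcard : Fintype.card F = q) :
    Nat.card {X : Matrix (Fin 2) (Fin 2) F // X.trace = 0 ∧ Irreducible X.charpoly}
      = q * (q - 1) ^ 2 / 2 :=
  card_elliptic_sl2_general q hq F hcard
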